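/- arXiv:1409.8345 — 2 statements merged into one kernel-verified Lean document; each statement's English description precedes it below -/
import Mathlib

section
/- Let F be a Banach space and S : [0,∞) → L(F) with S(0) = I, t ↦ S(t)f continuous for each f, and suppose for a fixed f ∈ F there exists g ∈ F with lim_{t→0⁺} (S(t)f − f)/t = g. Define R(t) = exp(i·a·(S(t) − I)) for a fixed real a ≠ 0. Then lim_{t→0⁺} (R(t)f − f)/t = i·a·g. -/
/-!
With `A t = i a (S t - I)`, the exponential series gives
`exp (A t) f - f = A t f + R t` where `‖R t‖ ≤ exp ‖A t‖ * ‖A t (A t f)‖`.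
Banach–Steinhaus bounds `‖S t‖` uniformly for `t ∈ [0, 1]`, so `‖A t‖` stays bounded, and
`t⁻¹ • A t (A t f) = A t (t⁻¹ • A t f)` tends to `0`: the operators `A t` are uniformly
bounded and tend strongly to `0`, while their arguments `t⁻¹ • A t f` converge (to `i a g`).
Hence `t⁻¹ • R t → 0` and only the first-order term `t⁻¹ • A t f → i a g` survives.
-/

open Filter Topology
open scoped Nat

namespace ContinuousLinearMap

section NontriviallyNormedField

variable {𝕜 E F : Type*} [NontriviallyNormedField 𝕜] [NormedAddCommGroup E] [NormedSpace 𝕜 E]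
  [NormedAddCommGroup F] [NormedSpace 𝕜 F]

lemma norm_pow_apply_le (A : E →L[𝕜] E) (n : ℕ) (x : E) : ‖(A ^ n) x‖ ≤ ‖A‖ ^ n * ‖x‖ := by
  induction n with
  | zero => simp
  | succ n ih =>
    calc ‖(A ^ (n + 1)) x‖ = ‖A ((A ^ n) x)‖ := by rw [pow_succ']; rfl
      _ ≤ ‖A‖ * (‖A‖ ^ n * ‖x‖) :=
          (A.le_opNorm _).trans (mul_le_mul_of_nonneg_left ih (norm_nonneg A))
      _ = ‖A‖ ^ (n + 1) * ‖x‖ := by ring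

lemma tendsto_apply_of_tendsto_of_norm_le {α : Type*} {l : Filter α} {T : α → E →L[𝕜] F}
    {T₀ : E →L[𝕜] F} {C : ℝ} {v : α → E} {v₀ : E} (hC : ∀ᶠ t in l, ‖T t‖ ≤ C)
    (hT : ∀ x, Tendsto (fun t => T t x) l (𝓝 (T₀ x))) (hv : Tendsto v l (𝓝 v₀)) :
    Tendsto (fun t => T t (v t)) l (𝓝 (T₀ v₀)) := by
  have hsmall : Tendsto (fun t => T t (v t - v₀)) l (𝓝 0) := by
    refine squeeze_zero_norm' (hC.mono fun t ht => (T t).le_of_opNorm_le ht _) ?_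
    simpa using (tendsto_sub_nhds_zero_iff.2 hv).norm.const_mul C
  simpa using hsmall.add (hT v₀)

lemma exists_norm_le_of_continuousOn_apply [CompleteSpace E] {X : Type*} [TopologicalSpace X]
    {S : X → E →L[𝕜] F} {K : Set X} (hK : IsCompact K)
    (hS : ∀ x, ContinuousOn (fun t => S t x) K) : ∃ C, ∀ t ∈ K, ‖S t‖ ≤ C := by
  obtain ⟨C, hC⟩ := banach_steinhaus (g := fun t : K => S t) fun x => by
    obtain ⟨C, hC⟩ := hK.exists_bound_of_continuousOn (hS x)
    exact ⟨C, fun t => hC t t.2⟩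
  exact ⟨C, fun t ht => hC ⟨t, ht⟩⟩

end NontriviallyNormedField

variable {𝕜 E : Type*} [RCLike 𝕜] [NormedAddCommGroup E] [NormedSpace 𝕜 E] [CompleteSpace E]

lemma hasSum_exp_apply (A : E →L[𝕜] E) (x : E) :
    HasSum (fun n : ℕ => (n !⁻¹ : 𝕜) • (A ^ n) x) (NormedSpace.exp A x) :=
  (NormedSpace.exp_series_hasSum_exp' (𝕂 := 𝕜) A).mapL (apply 𝕜 E x)

lemma norm_exp_apply_sub_sub_le (A : E →L[𝕜] E) (x : E) :
    ‖NormedSpace.exp A x - x - A x‖ ≤ Real.exp ‖A‖ * ‖A (A x)‖ := by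
  have hrem : HasSum (fun n : ℕ => ((n + 2)! ⁻¹ : 𝕜) • (A ^ n) (A (A x)))
      (NormedSpace.exp A x - x - A x) := by
    convert (hasSum_nat_add_iff' 2).2 (hasSum_exp_apply A x) using 1
    · ext n; rw [pow_add, pow_two, ← mul_assoc]; push_cast; rfl
    · simp [Finset.sum_range_succ, sub_sub]
  have hexp : HasSum (fun n : ℕ => ‖A‖ ^ n / n ! * ‖A (A x)‖) (Real.exp ‖A‖ * ‖A (A x)‖) := by
    rw [Real.exp_eq_exp_ℝ]
    exact (NormedSpace.expSeries_div_hasSum_exp ‖A‖).mul_right _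
  refine hrem.norm_le_of_bounded hexp fun n => ?_
  rw [norm_smul, norm_inv, RCLike.norm_natCast, div_mul_eq_mul_div, ← inv_mul_eq_div]
  gcongr
  · omega
  · exact norm_pow_apply_le A n _

lemma tendsto_smul_exp_apply_sub {α : Type*} {l : Filter α} {A : α → E →L[𝕜] E} {s : α → 𝕜}
    {M : ℝ} {f h : E} (hM : ∀ᶠ t in l, ‖A t‖ ≤ M) (hA : ∀ x, Tendsto (fun t => A t x) l (𝓝 0))
    (hf : Tendsto (fun t => s t • A t f) l (𝓝 h)) :
    Tendsto (fun t => s t • (NormedSpace.exp (A t) f - f)) l (𝓝 h) := by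
  have hsecond : Tendsto (fun t => A t (s t • A t f)) l (𝓝 0) := by
    simpa using tendsto_apply_of_tendsto_of_norm_le (T₀ := 0) hM hA hf
  have hrem : Tendsto (fun t => s t • (NormedSpace.exp (A t) f - f - A t f)) l (𝓝 0) := by
    refine squeeze_zero_norm' (a := fun t => Real.exp M * ‖A t (s t • A t f)‖) ?_ ?_
    · filter_upwards [hM] with t ht
      rw [norm_smul, map_smul, norm_smul, mul_left_comm]
      exact mul_le_mul_of_nonneg_left
        ((norm_exp_apply_sub_sub_le _ _).trans (by gcongr)) (norm_nonneg _)
    · simpa using hsecond.norm.const_mul (Real.exp M)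
  simpa [smul_sub] using hf.add hrem

end ContinuousLinearMap

theorem chernoff_tangency_of_exp_family_general
    {F : Type*} [NormedAddCommGroup F] [NormedSpace ℂ F] [CompleteSpace F]
    (S : ℝ → F →L[ℂ] F) (a : ℝ)
    (hS0 : S 0 = 1)
    (hcont : ∀ f : F, ContinuousOn (fun t => S t f) (Set.Ici 0))
    (f g : F)
    (hder : Tendsto (fun t : ℝ => t⁻¹ • (S t f - f)) (𝓝[>] 0) (𝓝 g)) :
    Tendsto
      (fun t : ℝ => t⁻¹ •
        (NormedSpace.exp (((Complex.I : ℂ) * (a : ℂ)) • (S t - 1)) f - f))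
      (𝓝[>] 0) (𝓝 (((Complex.I : ℂ) * (a : ℂ)) • g)) := by
  set c : ℂ := Complex.I * a
  obtain ⟨C, hC⟩ := ContinuousLinearMap.exists_norm_le_of_continuousOn_apply
    (isCompact_Icc (a := (0 : ℝ)) (b := 1)) fun x => (hcont x).mono Set.Icc_subset_Ici_self
  have hbound : ∀ᶠ t in 𝓝[>] (0 : ℝ), ‖c • (S t - 1)‖ ≤ ‖c‖ * (C + ‖(1 : F →L[ℂ] F)‖) := by
    filter_upwards [Ioc_mem_nhdsGT one_pos] with t ht
    grw [norm_smul, norm_sub_le, hC t (Set.Ioc_subset_Icc_self ht)]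
  have hstrong : ∀ x, Tendsto (fun t => (c • (S t - 1)) x) (𝓝[>] 0) (𝓝 0) := by
    intro x
    have hSx := ((hcont x) 0 Set.self_mem_Ici).tendsto.mono_left
      (nhdsWithin_mono _ Set.Ioi_subset_Ici_self)
    simpa [hS0] using (hSx.sub_const x).const_smul c
  have hfirst : Tendsto (fun t : ℝ => ((t⁻¹ : ℝ) : ℂ) • (c • (S t - 1)) f) (𝓝[>] 0)
      (𝓝 (c • g)) := by
    simpa only [Complex.coe_smul, smul_comm _ c, smul_apply, sub_apply, one_apply_eq_self]
      using hder.const_smul c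
  simpa only [Complex.coe_smul] using
    ContinuousLinearMap.tendsto_smul_exp_apply_sub hbound hstrong hfirst

theorem chernoff_tangency_of_exp_family
    {F : Type*} [NormedAddCommGroup F] [NormedSpace ℂ F] [CompleteSpace F]
    (S : ℝ → F →L[ℂ] F) (a : ℝ) (ha : a ≠ 0)
    (hS0 : S 0 = 1)
    (hcont : ∀ f : F, ContinuousOn (fun t => S t f) (Set.Ici 0))
    (f g : F)
    (hder : Tendsto (fun t : ℝ => t⁻¹ • (S t f - f)) (𝓝[>] 0) (𝓝 g)) :
    Tendsto
      (fun t : ℝ => t⁻¹ •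
        (NormedSpace.exp (((Complex.I : ℂ) * (a : ℂ)) • (S t - 1)) f - f))
      (𝓝[>] 0) (𝓝 (((Complex.I : ℂ) * (a : ℂ)) • g)) :=
  chernoff_tangency_of_exp_family_general S a hS0 hcont f g hder
end

section
/- (Chernoff product formula, bounded-generator special case.) Let F be a Banach space, G : [0,∞) → L(F) with G(0) = I, t ↦ G(t)f continuous for each f, ‖G(t)‖ ≤ e^{ω t} for some ω ∈ ℝ, and suppose L is a bounded operator such that lim_{t→0⁺}(G(t)f − f)/t = Lf for all f ∈ F. Then for every f ∈ F and t ≥ 0, (G(t/n))^n f → e^{tL} f as n → ∞. -/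
/-!
With `s = t / n`, compare `G s ^ n` with `exp (s • L) ^ n = exp (t • L)` through the
noncommutative telescoping identity `A ^ n - B ^ n = ∑ i < n, A ^ (n - 1 - i) * (A - B) * B ^ i`.
The powers `G s ^ m`, `m s ≤ t`, are bounded by `exp (|ω| t)`, and the defect `G s - exp (s • L)`
is `o(s)` uniformly on the compact orbit `{exp (u • L) f | u ∈ [0, t]}`: pointwise by the
generator assumption, and uniformly because `s⁻¹ • (G s - exp (s • L))` stays bounded in
operator norm as `s → 0⁺` by Banach–Steinhaus. The `n` terms of size `o(s)` sum to `o(1)`.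
-/

open Filter Topology NormedSpace

theorem pow_sub_pow_eq_sum_pow_mul_sub_mul_pow {R : Type*} [Ring R] (a b : R) (n : ℕ) :
    a ^ n - b ^ n = ∑ i ∈ Finset.range n, a ^ (n - 1 - i) * (a - b) * b ^ i := by
  have htelescope := Finset.sum_range_sub' (fun i => a ^ (n - i) * b ^ i) n
  simp only [Nat.sub_zero, Nat.sub_self, pow_zero, mul_one, one_mul] at htelescope
  rw [← htelescope]
  refine Finset.sum_congr rfl fun i hi => ?_
  obtain ⟨k, rfl⟩ := Nat.exists_eq_add_of_lt (Finset.mem_range.1 hi)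
  rw [show i + k + 1 - i = k + 1 by omega, show i + k + 1 - (i + 1) = k by omega,
    show i + k + 1 - 1 - i = k by omega, pow_succ a k, pow_succ' b i]
  noncomm_ring

section Operators

variable {𝕜 E F : Type*} [NontriviallyNormedField 𝕜] [NormedAddCommGroup E] [NormedSpace 𝕜 E]
  [NormedAddCommGroup F] [NormedSpace 𝕜 F]

namespace ContinuousLinearMap

theorem norm_pow_apply_sub_pow_apply_le {A B : E →L[𝕜] E} {n : ℕ} {x : E} {C δ : ℝ}
    (hA : ∀ m < n, ‖A ^ m‖ ≤ C) (hAB : ∀ i < n, ‖(A - B) ((B ^ i) x)‖ ≤ δ) :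
    ‖(A ^ n) x - (B ^ n) x‖ ≤ n * (C * δ) := by
  rw [← sub_apply, pow_sub_pow_eq_sum_pow_mul_sub_mul_pow, sum_apply]
  calc ‖∑ i ∈ Finset.range n, (A ^ (n - 1 - i) * (A - B) * B ^ i) x‖
      ≤ ∑ i ∈ Finset.range n, ‖(A ^ (n - 1 - i)) ((A - B) ((B ^ i) x))‖ := norm_sum_le _ _
    _ ≤ ∑ _i ∈ Finset.range n, C * δ := Finset.sum_le_sum fun i hi => by
        have hi := Finset.mem_range.1 hi
        have hAi := hA (n - 1 - i) (by omega)
        exact (le_opNorm _ _).trans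
          (mul_le_mul hAi (hAB i hi) (norm_nonneg _) ((norm_nonneg _).trans hAi))
    _ = n * (C * δ) := by rw [Finset.sum_const, Finset.card_range, nsmul_eq_mul]

theorem norm_pow_le_exp_abs_mul {A : E →L[𝕜] E} {ω s t : ℝ} (hA : ‖A‖ ≤ Real.exp (ω * s))
    (hs : 0 ≤ s) {m : ℕ} (hm : m * s ≤ t) : ‖A ^ m‖ ≤ Real.exp (|ω| * t) := by
  have hpow : ‖A ^ m‖ ≤ Real.exp (ω * s) ^ m := by
    rcases m.eq_zero_or_pos with rfl | hm0
    · simpa [one_def] using norm_id_le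
    · exact (norm_pow_le' A hm0).trans (pow_le_pow_left₀ (norm_nonneg _) hA m)
  refine hpow.trans ?_
  rw [← Real.exp_nat_mul, Real.exp_le_exp]
  nlinarith [mul_nonneg (sub_nonneg.2 (le_abs_self ω)) (mul_nonneg m.cast_nonneg hs),
    mul_nonneg (abs_nonneg ω) (sub_nonneg.2 hm)]

theorem exists_eventually_norm_le_of_tendsto [CompleteSpace E] {ι : Type*} {l : Filter ι}
    [l.IsCountablyGenerated] {T : ι → E →L[𝕜] F} {S : E → F}
    (hT : ∀ x, Tendsto (fun i => T i x) l (𝓝 (S x))) : ∃ C, ∀ᶠ i in l, ‖T i‖ ≤ C := by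
  by_contra! hunbdd
  obtain ⟨B, hB⟩ := l.exists_antitone_basis
  have hexists (n : ℕ) : ∃ i ∈ B n, (n : ℝ) < ‖T i‖ :=
    ((hunbdd n).and_eventually (hB.mem n)).exists.imp fun _ h => ⟨h.2, h.1⟩
  choose u huB hu using hexists
  obtain ⟨C, hC⟩ := banach_steinhaus (g := fun n => T (u n)) fun x =>
    let ⟨C, hC⟩ := ((hT x).comp (hB.tendsto huB)).norm.bddAbove_range
    ⟨C, fun n => hC ⟨n, rfl⟩⟩
  obtain ⟨n, hn⟩ := exists_nat_ge C
  exact (hu n).not_ge ((hC n).trans hn)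

theorem eventually_forall_norm_apply_le_of_tendsto_zero {ι : Type*} {l : Filter ι}
    {T : ι → E →L[𝕜] F} {C : ℝ} (hC : ∀ᶠ i in l, ‖T i‖ ≤ C)
    (hT : ∀ x, Tendsto (fun i => T i x) l (𝓝 0)) {K : Set E} (hK : TotallyBounded K)
    {ε : ℝ} (hε : 0 < ε) : ∀ᶠ i in l, ∀ x ∈ K, ‖T i x‖ ≤ ε := by
  set r := ε / (2 * (|C| + 1))
  have hr : 0 < r := by positivity
  have hCr : C * r ≤ ε / 2 := by
    calc C * r ≤ (|C| + 1) * r := by gcongr; linarith [le_abs_self C]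
      _ = ε / 2 := by simp only [r]; field_simp
  obtain ⟨N, hNfin, hKN⟩ := Metric.totallyBounded_iff.1 hK r hr
  have hN : ∀ᶠ i in l, ∀ y ∈ N, ‖T i y‖ < ε / 2 :=
    (eventually_all_finite hNfin).2 fun y _ =>
      NormedAddGroup.tendsto_nhds_zero.1 (hT y) _ (half_pos hε)
  filter_upwards [hC, hN] with i hCi hNi x hx
  obtain ⟨y, hyN, hxy⟩ := Set.mem_iUnion₂.1 (hKN hx)
  calc ‖T i x‖ = ‖T i (x - y) + T i y‖ := by rw [← map_add, sub_add_cancel]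
    _ ≤ C * r + ε / 2 := by
        refine (norm_add_le _ _).trans (add_le_add ?_ (hNi y hyN).le)
        exact (le_opNorm _ _).trans (mul_le_mul hCi (mem_ball_iff_norm.1 hxy).le
          (norm_nonneg _) ((norm_nonneg _).trans hCi))
    _ ≤ ε := by linarith

end ContinuousLinearMap

end Operators

section Exponential

variable {𝔸 : Type*} [NormedRing 𝔸] [NormedAlgebra ℂ 𝔸] [CompleteSpace 𝔸]

theorem exp_ofReal_smul_pow (x : 𝔸) (s : ℝ) (n : ℕ) :
    exp ((s : ℂ) • x) ^ n = exp (((n * s : ℝ) : ℂ) • x) := by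
  -- `exp_nsmul` is stated for `ℚ`-algebras.
  let +nondep : NormedAlgebra ℚ 𝔸 := .restrictScalars ℚ ℂ 𝔸
  rw [← exp_nsmul, ← Nat.cast_smul_eq_nsmul ℂ, smul_smul]
  push_cast
  rfl

theorem hasDerivAt_exp_ofReal_smul (x : 𝔸) :
    HasDerivAt (fun s : ℝ => exp ((s : ℂ) • x)) x 0 := by
  have h := hasDerivAt_exp_smul_const' (𝕂 := ℂ) x ((0 : ℝ) : ℂ)
  simpa [Function.comp_def] using h.scomp (0 : ℝ) Complex.ofRealCLM.hasDerivAt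

end Exponential

section Semigroup

variable {F : Type*} [NormedAddCommGroup F] [NormedSpace ℂ F] [CompleteSpace F]

theorem continuous_exp_ofReal_smul_apply (L : F →L[ℂ] F) (f : F) :
    Continuous fun u : ℝ => exp ((u : ℂ) • L) f :=
  ((differentiable_exp_smul_const ℂ L).continuous.comp Complex.continuous_ofReal).clm_apply
    continuous_const

theorem tendsto_inv_smul_sub_exp_ofReal_smul_apply {G : ℝ → F →L[ℂ] F} {L : F →L[ℂ] F}
    (hgen : ∀ f : F, Tendsto (fun t : ℝ => t⁻¹ • (G t f - f)) (𝓝[>] 0) (𝓝 (L f))) (f : F) :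
    Tendsto (fun s : ℝ => (s⁻¹ • (G s - exp ((s : ℂ) • L))) f) (𝓝[>] 0) (𝓝 0) := by
  have hexp : Tendsto (fun s : ℝ => s⁻¹ • (exp ((s : ℂ) • L) f - f)) (𝓝[>] 0) (𝓝 (L f)) := by
    have h := ((ContinuousLinearMap.apply ℂ F f).continuous.tendsto L).comp
      (hasDerivAt_iff_tendsto_slope.1 (hasDerivAt_exp_ofReal_smul L))
    simpa [slope_def_module, Function.comp_def] using h.mono_left (nhdsGT_le_nhdsNE 0)
  convert (hgen f).sub hexp using 2 with s
  · simp only [smul_apply, sub_apply, ← smul_sub, sub_sub_sub_cancel_right]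
  · rw [sub_self]

theorem eventually_norm_sub_exp_ofReal_smul_apply_le {G : ℝ → F →L[ℂ] F} {L : F →L[ℂ] F}
    (hgen : ∀ f : F, Tendsto (fun t : ℝ => t⁻¹ • (G t f - f)) (𝓝[>] 0) (𝓝 (L f)))
    (f : F) (t : ℝ) {ε : ℝ} (hε : 0 < ε) :
    ∀ᶠ s in 𝓝[>] 0, ∀ u ∈ Set.Icc 0 t,
      ‖(G s - exp ((s : ℂ) • L)) (exp ((u : ℂ) • L) f)‖ ≤ ε * s := by
  have hdefect := tendsto_inv_smul_sub_exp_ofReal_smul_apply hgen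
  obtain ⟨C, hC⟩ := ContinuousLinearMap.exists_eventually_norm_le_of_tendsto hdefect
  have horbit : TotallyBounded ((fun u : ℝ => exp ((u : ℂ) • L) f) '' Set.Icc 0 t) :=
    (isCompact_Icc.image (continuous_exp_ofReal_smul_apply L f)).totallyBounded
  filter_upwards [ContinuousLinearMap.eventually_forall_norm_apply_le_of_tendsto_zero hC hdefect
    horbit hε, self_mem_nhdsWithin] with s hs (hs0 : 0 < s) u hu
  have h := hs _ (Set.mem_image_of_mem _ hu)
  rw [smul_apply, norm_smul, norm_inv, Real.norm_of_nonneg hs0.le] at h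
  rw [mul_comm]
  exact (inv_mul_le_iff₀ hs0).1 h

theorem norm_pow_apply_sub_exp_ofReal_smul_apply_le {G : ℝ → F →L[ℂ] F} {ω : ℝ}
    (hGnorm : ∀ t : ℝ, 0 ≤ t → ‖G t‖ ≤ Real.exp (ω * t)) {L : F →L[ℂ] F} {f : F} {t ε : ℝ}
    (ht : 0 ≤ t) {n : ℕ} (hn : 0 < n)
    (hdefect : ∀ u ∈ Set.Icc 0 t,
      ‖(G (t / n) - exp (((t / n : ℝ) : ℂ) • L)) (exp ((u : ℂ) • L) f)‖ ≤ ε * (t / n)) :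
    ‖(G (t / n) ^ n) f - exp ((t : ℂ) • L) f‖ ≤ Real.exp (|ω| * t) * t * ε := by
  have hs : 0 ≤ t / n := by positivity
  have hns : n * (t / n) = t := mul_div_cancel₀ _ (Nat.cast_pos.2 hn).ne'
  have hle {m : ℕ} (hm : m < n) : m * (t / n) ≤ t :=
    (mul_le_mul_of_nonneg_right (Nat.cast_le.2 hm.le) hs).trans_eq hns
  have hexp : exp ((t : ℂ) • L) = exp (((t / n : ℝ) : ℂ) • L) ^ n := by
    rw [exp_ofReal_smul_pow L (t / n) n, hns]
  rw [hexp]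
  calc _ ≤ n * (Real.exp (|ω| * t) * (ε * (t / n))) := by
        refine ContinuousLinearMap.norm_pow_apply_sub_pow_apply_le (fun m hm => ?_) fun i hi => ?_
        · exact ContinuousLinearMap.norm_pow_le_exp_abs_mul (hGnorm _ hs) hs (hle hm)
        · rw [exp_ofReal_smul_pow]
          exact hdefect _ ⟨by positivity, hle hi⟩
    _ = Real.exp (|ω| * t) * t * ε := by rw [← hns]; field_simp

end Semigroup

theorem chernoff_product_formula_bounded_generator_general
    {F : Type*} [NormedAddCommGroup F] [NormedSpace ℂ F] [CompleteSpace F]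
    (G : ℝ → F →L[ℂ] F) (ω : ℝ)
    (hG0 : G 0 = 1)
    (hGnorm : ∀ t : ℝ, 0 ≤ t → ‖G t‖ ≤ Real.exp (ω * t))
    (L : F →L[ℂ] F)
    (hgen : ∀ f : F, Tendsto (fun t : ℝ => t⁻¹ • (G t f - f)) (𝓝[>] 0) (𝓝 (L f))) :
    ∀ (f : F) (t : ℝ), 0 ≤ t →
      Tendsto (fun n : ℕ => ((G (t / n)) ^ n) f) atTop
        (𝓝 (NormedSpace.exp ((t : ℂ) • L) f)) := by
  intro f t ht
  rcases ht.eq_or_lt with rfl | ht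
  · simp [hG0]
  have hstep : Tendsto (fun n : ℕ => t / n) atTop (𝓝[>] 0) :=
    tendsto_nhdsWithin_iff.2 ⟨tendsto_const_div_atTop_nhds_zero_nat t,
      (eventually_gt_atTop 0).mono fun n hn => div_pos ht (Nat.cast_pos.2 hn)⟩
  set C := Real.exp (|ω| * t) * t
  refine Metric.tendsto_nhds.2 fun ε hε => ?_
  have hε' : 0 < ε / (C + 1) := by positivity
  filter_upwards [hstep.eventually (eventually_norm_sub_exp_ofReal_smul_apply_le hgen f t hε'),
    eventually_gt_atTop 0] with n hdefect hn
  rw [dist_eq_norm]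
  calc _ ≤ C * (ε / (C + 1)) :=
        norm_pow_apply_sub_exp_ofReal_smul_apply_le hGnorm ht.le hn hdefect
    _ < ε := by
        rw [← mul_div_assoc, div_lt_iff₀ (by positivity)]
        linarith [mul_comm C ε]

theorem chernoff_product_formula_bounded_generator
    {F : Type*} [NormedAddCommGroup F] [NormedSpace ℂ F] [CompleteSpace F]
    (G : ℝ → F →L[ℂ] F) (ω : ℝ)
    (hG0 : G 0 = 1)
    (hGcont : ∀ f : F, ContinuousOn (fun t : ℝ => G t f) (Set.Ici 0))
    (hGnorm : ∀ t : ℝ, 0 ≤ t → ‖G t‖ ≤ Real.exp (ω * t))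
    (L : F →L[ℂ] F)
    (hgen : ∀ f : F, Tendsto (fun t : ℝ => t⁻¹ • (G t f - f)) (𝓝[>] 0) (𝓝 (L f))) :
    ∀ (f : F) (t : ℝ), 0 ≤ t →
      Tendsto (fun n : ℕ => ((G (t / n)) ^ n) f) atTop
        (𝓝 (NormedSpace.exp ((t : ℂ) • L) f)) :=
  chernoff_product_formula_bounded_generator_general G ω hG0 hGnorm L hgen
end
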